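/- arXiv:2106.04483 — 5 statements merged into one kernel-verified Lean document; each statement's English description precedes it below -/
import Mathlib

section
/- For any CDS instance whose minimum connected edge cover number ρ is finite, every linear CDS scheme for that instance with secret length L and signal length N satisfies ρ·L ≤ (ρ−1)·N; equivalently, the linear rate L/(2N) is at most (ρ−1)/(2ρ). -/
open Matrix

/-- The row space of a matrix: the span of its rows in `Fin LZ → F`. -/
noncomputable def rowSpan {F : Type} [Field F] {N LZ : ℕ}
    (H : Matrix (Fin N) (Fin LZ) F) : Submodule F (Fin LZ → F) :=
  Submodule.span F (Set.range H)

/-- Linear correctness condition for a (qualified) pair of nodes. -/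
def CorrectPair (F : Type) [Field F] (L N LZ : ℕ)
    (Fv Fu : Matrix (Fin N) (Fin L) F) (Hv Hu : Matrix (Fin N) (Fin LZ) F) : Prop :=
  ∀ (k : ℕ) (Pv Pu : Matrix (Fin k) (Fin N) F),
    Pv * Hv = Pu * Hu →
    Pv.rank = Module.finrank F ↥(rowSpan Hv ⊓ rowSpan Hu) →
    Pu.rank = Module.finrank F ↥(rowSpan Hv ⊓ rowSpan Hu) →
    (Pv * Fv - Pu * Fu).rank = L

/-- Linear security condition for an (unqualified) pair of nodes. -/
def SecurePair (F : Type) [Field F] (L N LZ : ℕ)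
    (Fv Fu : Matrix (Fin N) (Fin L) F) (Hv Hu : Matrix (Fin N) (Fin LZ) F) : Prop :=
  ∀ (k : ℕ) (Pv Pu : Matrix (Fin k) (Fin N) F),
    Pv * Hv = Pu * Hu → Pv * Fv = Pu * Fu

/-- A CDS instance: a bipartite graph with qualified and unqualified edges. -/
structure CDSInstance (V : Type) where
  isA : V → Prop
  qual : V → V → Prop
  unqual : V → V → Prop
  qual_symm : ∀ v u, qual v u → qual u v
  unqual_symm : ∀ v u, unqual v u → unqual u v
  qual_bip : ∀ v u, qual v u → (isA v ↔ ¬ isA u)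
  unqual_bip : ∀ v u, unqual v u → (isA v ↔ ¬ isA u)

/-- An unqualified path: a list of nodes joined consecutively by unqualified
edges, with all the (unordered) edges distinct. -/
def IsUnqualPath {V : Type} (I : CDSInstance V) (P : List V) : Prop :=
  2 ≤ P.length ∧ P.Chain' I.unqual ∧
    (List.zipWith (fun a b => s(a, b)) P P.tail).Nodup

/-- An unordered edge all of whose representatives are qualified. -/
def IsQualEdge {V : Type} (I : CDSInstance V) (e : Sym2 V) : Prop :=
  ∃ a b, e = s(a, b) ∧ I.qual a b

/-- A connected edge cover `M` of the node set of an unqualified path `P`, with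
respect to an internal qualified edge `{a, b}` of `P`. -/
def IsConnCover {V : Type} (I : CDSInstance V) (a b : V) (P : List V)
    (M : Finset (Sym2 V)) : Prop :=
  s(a, b) ∈ M ∧
  (∀ e ∈ M, IsQualEdge I e) ∧
  (∀ x y : V, (∃ e ∈ M, x ∈ e) → (∃ e ∈ M, y ∈ e) →
      Relation.ReflTransGen (fun w z => s(w, z) ∈ M) x y) ∧
  (∀ v ∈ P, ∃ e ∈ M, v ∈ e)

/-- `ρ(e, P)`: the minimum size of a connected edge cover (`+∞` if none exists). -/
noncomputable def rhoEP {V : Type} (I : CDSInstance V) (a b : V) (P : List V) : ℕ∞ :=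
  sInf ((fun M : Finset (Sym2 V) => (M.card : ℕ∞)) '' {M | IsConnCover I a b P M})

/-- `ρ`: the minimum of `ρ(e, P)` over all internal qualified edges `e` of
unqualified paths `P`. -/
noncomputable def rho {V : Type} (I : CDSInstance V) : ℕ∞ :=
  sInf {x : ℕ∞ | ∃ a b P, IsUnqualPath I P ∧ I.qual a b ∧ a ∈ P ∧ b ∈ P ∧
    x = rhoEP I a b P}

/-- A linear CDS scheme for a CDS instance. -/
def IsLinearCDSScheme {V : Type} (F : Type) [Field F] (L N LZ : ℕ) (I : CDSInstance V)
    (Fm : V → Matrix (Fin N) (Fin L) F) (Hm : V → Matrix (Fin N) (Fin LZ) F) : Prop :=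
  (∀ v, (Hm v).rank = N) ∧
  (∀ v u, I.qual v u → CorrectPair F L N LZ (Fm v) (Fm u) (Hm v) (Hm u)) ∧
  (∀ v u, I.unqual v u → SecurePair F L N LZ (Fm v) (Fm u) (Hm v) (Hm u))

/-!
For a node `v`, a vector `w = p ᵥ* H_v` of the row space `U_v` of `H_v` determines `p`, hence the
value `p ᵥ* F_v` that `v` decodes from it. Security makes the two ends of an unqualified edge decode
the same value from common vectors; propagating along the unqualified path, on the intersection `D`
of the `U_v` over the nodes of a connected edge cover `M`, the ends `a, b` of the internal qualified
edge decode the same value. Correctness makes the difference of their decodings map `U_a ⊓ U_b`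
onto `F^L`, so `dim D + L ≤ dim (U_a ⊓ U_b)`. On the other hand correctness gives
`dim (U_p ⊓ U_q) ≥ L` on every qualified edge, and growing `M` from `{a, b}` one adjacent edge at a
time loses at most `N - L` dimensions per edge, so `dim (U_a ⊓ U_b) ≤ dim D + (ρ - 1) (N - L)`.
Hence `L ≤ (ρ - 1) (N - L)`.
-/

open Module Submodule

section LinearAlgebra

variable {K E E' : Type*} [DivisionRing K] [AddCommGroup E] [Module K E]
  [AddCommGroup E'] [Module K E']

theorem Submodule.finrank_add_finrank_le_finrank_inf_add {A B C : Submodule K E}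
    [FiniteDimensional K C] (hA : A ≤ C) (hB : B ≤ C) :
    finrank K A + finrank K B ≤ finrank K ↥(A ⊓ B) + finrank K C := by
  have : FiniteDimensional K A := Submodule.finiteDimensional_of_le hA
  have : FiniteDimensional K B := Submodule.finiteDimensional_of_le hB
  rw [← Submodule.finrank_sup_add_finrank_inf_eq, add_comm]
  exact Nat.add_le_add_left (Submodule.finrank_mono (sup_le hA hB)) _

theorem Submodule.finrank_add_finrank_map_le {f : E →ₗ[K] E'} {D W : Submodule K E}
    [FiniteDimensional K W] (hDW : D ≤ W) (hD : D ≤ LinearMap.ker f) :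
    finrank K D + finrank K (W.map f) ≤ finrank K W := by
  have hrank := (f.domRestrict W).finrank_range_add_finrank_ker
  rw [LinearMap.range_domRestrict] at hrank
  have hker : finrank K D ≤ finrank K (LinearMap.ker (f.domRestrict W)) := by
    rw [← (Submodule.comapSubtypeEquivOfLe hDW).finrank_eq]
    exact Submodule.finrank_mono fun x hx => hD hx
  omega

theorem Matrix.rank_of_apply_basis {F W : Type*} [Field F] [AddCommGroup W] [Module F W]
    {d m : ℕ} (β : Basis (Fin d) F W) (f : W →ₗ[F] (Fin m → F)) :
    (Matrix.of fun i => f (β i)).rank = finrank F (LinearMap.range f) := by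
  rw [Matrix.rank_eq_finrank_span_row, LinearMap.range_eq_map, ← β.span_eq, ← Submodule.span_image,
    ← Set.range_comp]
  rfl

end LinearAlgebra

namespace Matrix

variable {F : Type} [Field F] {N LZ : ℕ}

theorem rowSpan_eq_range_vecMulLinear (H : Matrix (Fin N) (Fin LZ) F) :
    rowSpan H = LinearMap.range H.vecMulLinear :=
  (range_vecMulLinear H).symm

theorem finrank_rowSpan (H : Matrix (Fin N) (Fin LZ) F) : finrank F (rowSpan H) = H.rank :=
  H.rank_eq_finrank_span_row.symm

theorem mem_rowSpan_iff {H : Matrix (Fin N) (Fin LZ) F} {w : Fin LZ → F} :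
    w ∈ rowSpan H ↔ ∃ p, p ᵥ* H = w := by
  rw [rowSpan_eq_range_vecMulLinear]
  rfl

theorem of_mul_eq_of_vecMul {m n o : Type*} [Fintype n] {R : Type*} [NonUnitalNonAssocSemiring R]
    (g : m → n → R) (B : Matrix n o R) : of g * B = of fun i => g i ᵥ* B :=
  funext fun i => mul_apply_eq_vecMul _ _ i

theorem ker_vecMulLinear_eq_bot {H : Matrix (Fin N) (Fin LZ) F} (hH : H.rank = N) :
    LinearMap.ker H.vecMulLinear = ⊥ := by
  rw [LinearMap.ker_eq_bot]
  refine vecMul_injective_iff.2 (linearIndependent_iff_card_eq_finrank_span.2 ?_)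
  rw [Fintype.card_fin]
  exact hH.symm.trans H.rank_eq_finrank_span_row

noncomputable def rowCoords (H : Matrix (Fin N) (Fin LZ) F) (hH : H.rank = N) :
    (Fin LZ → F) →ₗ[F] (Fin N → F) :=
  (H.vecMulLinear.exists_leftInverse_of_injective (ker_vecMulLinear_eq_bot hH)).choose

variable {H : Matrix (Fin N) (Fin LZ) F} (hH : H.rank = N)

@[simp]
theorem rowCoords_vecMul (p : Fin N → F) : rowCoords H hH (p ᵥ* H) = p :=
  LinearMap.congr_fun
    (H.vecMulLinear.exists_leftInverse_of_injective (ker_vecMulLinear_eq_bot hH)).choose_spec p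

theorem rowCoords_vecMul_of_mem {w : Fin LZ → F} (hw : w ∈ rowSpan H) :
    rowCoords H hH w ᵥ* H = w := by
  obtain ⟨p, rfl⟩ := mem_rowSpan_iff.1 hw
  rw [rowCoords_vecMul]

theorem finrank_range_rowCoords_comp_subtype {W : Submodule F (Fin LZ → F)} (hW : W ≤ rowSpan H) :
    finrank F (LinearMap.range (rowCoords H hH ∘ₗ W.subtype)) = finrank F W := by
  refine LinearMap.finrank_range_of_inj fun x y hxy => Subtype.ext ?_
  rw [← rowCoords_vecMul_of_mem hH (hW x.2), ← rowCoords_vecMul_of_mem hH (hW y.2)]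
  exact congrArg (· ᵥ* H) hxy

end Matrix

section Pairs

open Matrix

variable {F : Type} [Field F] {N L LZ : ℕ} {Fv Fu : Matrix (Fin N) (Fin L) F}
  {Hv Hu : Matrix (Fin N) (Fin LZ) F}

noncomputable def decoder (Fv : Matrix (Fin N) (Fin L) F) (Hv : Matrix (Fin N) (Fin LZ) F)
    (hv : Hv.rank = N) : (Fin LZ → F) →ₗ[F] (Fin L → F) :=
  Fv.vecMulLinear ∘ₗ Hv.rowCoords hv

theorem SecurePair.decoder_eq (hv : Hv.rank = N) (hu : Hu.rank = N)
    (hS : SecurePair F L N LZ Fv Fu Hv Hu) {w : Fin LZ → F} (hw : w ∈ rowSpan Hv ⊓ rowSpan Hu) :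
    decoder Fv Hv hv w = decoder Fu Hu hu w := by
  have hrows := hS 1 (of fun _ => Hv.rowCoords hv w) (of fun _ => Hu.rowCoords hu w) (by
    rw [of_mul_eq_of_vecMul, of_mul_eq_of_vecMul, rowCoords_vecMul_of_mem hv hw.1,
      rowCoords_vecMul_of_mem hu hw.2])
  rw [of_mul_eq_of_vecMul, of_mul_eq_of_vecMul] at hrows
  exact congrFun hrows 0

theorem CorrectPair.finrank_map_decoder_sub (hv : Hv.rank = N) (hu : Hu.rank = N)
    (hC : CorrectPair F L N LZ Fv Fu Hv Hu) :
    finrank F ((rowSpan Hv ⊓ rowSpan Hu).map (decoder Fv Hv hv - decoder Fu Hu hu)) = L := by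
  set W := rowSpan Hv ⊓ rowSpan Hu
  let β := Module.finBasis F W
  have hPv : (of fun i => (Hv.rowCoords hv ∘ₗ W.subtype) (β i)) * Hv = of fun i => β i := by
    rw [of_mul_eq_of_vecMul]
    exact funext fun i => rowCoords_vecMul_of_mem hv (β i).2.1
  have hPu : (of fun i => (Hu.rowCoords hu ∘ₗ W.subtype) (β i)) * Hu = of fun i => β i := by
    rw [of_mul_eq_of_vecMul]
    exact funext fun i => rowCoords_vecMul_of_mem hu (β i).2.2
  have hrank := hC _ _ _ (hPv.trans hPu.symm)
    (by rw [rank_of_apply_basis, finrank_range_rowCoords_comp_subtype hv inf_le_left])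
    (by rw [rank_of_apply_basis, finrank_range_rowCoords_comp_subtype hu inf_le_right])
  rw [of_mul_eq_of_vecMul, of_mul_eq_of_vecMul] at hrank
  rw [← LinearMap.range_domRestrict, ← rank_of_apply_basis β]
  exact hrank

theorem CorrectPair.le_finrank_inf (hv : Hv.rank = N) (hu : Hu.rank = N)
    (hC : CorrectPair F L N LZ Fv Fu Hv Hu) : L ≤ finrank F ↥(rowSpan Hv ⊓ rowSpan Hu) :=
  (hC.finrank_map_decoder_sub hv hu).symm.trans_le (Submodule.finrank_map_le _ _)

theorem CorrectPair.finrank_add_le (hv : Hv.rank = N) (hu : Hu.rank = N)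
    (hC : CorrectPair F L N LZ Fv Fu Hv Hu) {D : Submodule F (Fin LZ → F)}
    (hDW : D ≤ rowSpan Hv ⊓ rowSpan Hu) (hD : ∀ w ∈ D, decoder Fv Hv hv w = decoder Fu Hu hu w) :
    finrank F D + L ≤ finrank F ↥(rowSpan Hv ⊓ rowSpan Hu) := by
  rw [← hC.finrank_map_decoder_sub hv hu]
  refine Submodule.finrank_add_finrank_map_le hDW fun w hw => ?_
  rw [LinearMap.mem_ker, LinearMap.sub_apply, hD w hw, sub_self]

end Pairs

theorem List.IsChain.eq_of_mem {α β : Type*} {f : α → β} {l : List α}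
    (hl : l.IsChain fun x y => f x = f y) {x y : α} (hx : x ∈ l) (hy : y ∈ l) : f x = f y := by
  cases l with
  | nil => simp at hx
  | cons c l =>
    have hc := hl.induction (fun z => f z = f c) _ (fun _ _ hxy hx => hxy.symm.trans hx)
      fun _ => rfl
    exact (hc x hx).trans (hc y hy).symm

theorem Relation.ReflTransGen.exists_rel_of_mem_of_notMem {α : Type*} {r : α → α → Prop}
    {T : Set α} {x y : α} (h : Relation.ReflTransGen r x y) (hx : x ∈ T) (hy : y ∉ T) :
    ∃ w z, w ∈ T ∧ z ∉ T ∧ r w z := by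
  induction h with
  | refl => exact absurd hx hy
  | @tail b c _ hbc ih =>
    by_cases hb : b ∈ T
    · exact ⟨b, c, hb, hy, hbc⟩
    · exact ih hb

theorem Sym2.iInf_mem_mk {α β : Type*} [CompleteLattice β] (f : α → β) (a b : α) :
    ⨅ v ∈ s(a, b), f v = f a ⊓ f b := by
  simp [Sym2.mem_iff, iInf_or, iInf_inf_eq]

section EdgeCovers

variable {V : Type*}

def EdgesConnected (M : Finset (Sym2 V)) : Prop :=
  ∀ x y : V, (∃ e ∈ M, x ∈ e) → (∃ e ∈ M, y ∈ e) →
    Relation.ReflTransGen (fun w z => s(w, z) ∈ M) x y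

theorem EdgesConnected.exists_mem_sdiff_inter [DecidableEq V] {M S : Finset (Sym2 V)}
    (hM : EdgesConnected M) (hSM : S ⊆ M) (hS : S.Nonempty) (hMS : ¬M ⊆ S) :
    ∃ e ∈ M \ S, ∃ f ∈ S, ∃ z, z ∈ e ∧ z ∈ f := by
  obtain ⟨e₀, he₀M, he₀S⟩ := Finset.not_subset.1 hMS
  obtain ⟨f₀, hf₀⟩ := hS
  by_cases hx : ∃ f ∈ S, e₀.out.1 ∈ f
  · obtain ⟨f, hf, hxf⟩ := hx
    exact ⟨e₀, Finset.mem_sdiff.2 ⟨he₀M, he₀S⟩, f, hf, _, e₀.out_fst_mem, hxf⟩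
  · have hwalk := hM _ _ ⟨f₀, hSM hf₀, f₀.out_fst_mem⟩ ⟨e₀, he₀M, e₀.out_fst_mem⟩
    obtain ⟨w, z, ⟨f, hf, hwf⟩, hz, hwz⟩ := hwalk.exists_rel_of_mem_of_notMem
      (T := {v | ∃ f ∈ S, v ∈ f}) ⟨f₀, hf₀, f₀.out_fst_mem⟩ hx
    exact ⟨s(w, z), Finset.mem_sdiff.2 ⟨hwz, fun h => hz ⟨_, h, Sym2.mem_mk_right w z⟩⟩,
      f, hf, w, Sym2.mem_mk_left w z, hwf⟩

variable {K W : Type*} [DivisionRing K] [AddCommGroup W] [Module K W] [FiniteDimensional K W]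

/-- Adding an edge that meets the nodes already covered costs at most `n - l` dimensions, since
its subspace and the current intersection both lie in the `n`-dimensional subspace of a common
node. -/
theorem EdgesConnected.finrank_iInf_add_le [DecidableEq V] (U : V → Submodule K W) {n l : ℕ}
    (hU : ∀ v, finrank K (U v) ≤ n) {M : Finset (Sym2 V)} (hM : EdgesConnected M)
    (hl : ∀ e ∈ M, l ≤ finrank K ↥(⨅ v ∈ e, U v)) {S : Finset (Sym2 V)} (hSM : S ⊆ M)
    (hS : S.Nonempty) :
    finrank K ↥(⨅ e ∈ S, ⨅ v ∈ e, U v) + (M \ S).card * l ≤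
      finrank K ↥(⨅ e ∈ M, ⨅ v ∈ e, U v) + (M \ S).card * n := by
  induction hk : (M \ S).card generalizing S with
  | zero =>
    rw [Finset.card_eq_zero, Finset.sdiff_eq_empty_iff_subset] at hk
    rw [hk.antisymm hSM, zero_mul, zero_mul]
  | succ k ih =>
    have hMS : ¬M ⊆ S := fun h => by simp [Finset.sdiff_eq_empty_iff_subset.2 h] at hk
    obtain ⟨e, he, f, hf, z, hze, hzf⟩ := hM.exists_mem_sdiff_inter hSM hS hMS
    have hSz : ⨅ e ∈ S, ⨅ v ∈ e, U v ≤ U z := (iInf₂_le f hf).trans (iInf₂_le z hzf)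
    have hez : ⨅ v ∈ e, U v ≤ U z := iInf₂_le z hze
    have hstep := Submodule.finrank_add_finrank_le_finrank_inf_add hez hSz
    have hcard : (M \ insert e S).card = k := by
      rw [Finset.sdiff_insert, Finset.card_erase_of_mem he, hk, Nat.add_sub_cancel]
    have hgrow := ih (Finset.insert_subset (Finset.mem_sdiff.1 he).1 hSM)
      (Finset.insert_nonempty _ _) hcard
    rw [Finset.iInf_insert] at hgrow
    have := hl e (Finset.mem_sdiff.1 he).1
    have := hU z
    push_cast [add_mul, one_mul]
    linarith

end EdgeCovers

theorem ENat.sInf_mem_of_ne_top {s : Set ℕ∞} (h : sInf s ≠ ⊤) : sInf s ∈ s :=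
  csInf_mem (Set.nonempty_iff_ne_empty.2 fun hs => h (by rw [hs, sInf_empty]))

theorem exists_isConnCover_card_eq {V : Type} {I : CDSInstance V} {r : ℕ} (hr : rho I = r) :
    ∃ a b P M, P.IsChain I.unqual ∧ I.qual a b ∧ a ∈ P ∧ b ∈ P ∧ IsConnCover I a b P M ∧
      M.card = r := by
  obtain ⟨a, b, P, hP, hab, haP, hbP, hρ⟩ := ENat.sInf_mem_of_ne_top (hr ▸ ENat.natCast_ne_top r)
  obtain ⟨M, hM, hcard⟩ := ENat.sInf_mem_of_ne_top (hρ.symm.trans hr ▸ ENat.natCast_ne_top r)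
  exact ⟨a, b, P, M, hP.2.1, hab, haP, hbP, hM,
    ENat.natCast_inj.1 (hcard.trans (hρ.symm.trans hr))⟩

section Scheme

variable {V F : Type} [Field F] {L N LZ : ℕ} {I : CDSInstance V}
  {Fm : V → Matrix (Fin N) (Fin L) F} {Hm : V → Matrix (Fin N) (Fin LZ) F}

theorem IsLinearCDSScheme.finrank_inf_add_le
    (hs : IsLinearCDSScheme F L N LZ I Fm Hm) {a b : V} {P : List V} {M : Finset (Sym2 V)}
    (hM : IsConnCover I a b P M) :
    finrank F ↥(rowSpan (Hm a) ⊓ rowSpan (Hm b)) + (M.card - 1) * L ≤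
      finrank F ↥(⨅ e ∈ M, ⨅ v ∈ e, rowSpan (Hm v)) + (M.card - 1) * N := by
  classical
  obtain ⟨hH, hCor, -⟩ := hs
  obtain ⟨habM, hqual, hconn, -⟩ := hM
  have hl : ∀ e ∈ M, L ≤ finrank F ↥(⨅ v ∈ e, rowSpan (Hm v)) := by
    intro e he
    obtain ⟨p, q, rfl, hpq⟩ := hqual e he
    rw [Sym2.iInf_mem_mk]
    exact (hCor p q hpq).le_finrank_inf (hH p) (hH q)
  have hgrow := EdgesConnected.finrank_iInf_add_le (fun v => rowSpan (Hm v))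
    (fun v => ((Hm v).finrank_rowSpan.trans (hH v)).le) hconn hl
    (Finset.singleton_subset_iff.2 habM) (Finset.singleton_nonempty _)
  rwa [Finset.iInf_singleton, Sym2.iInf_mem_mk,
    Finset.card_sdiff_of_subset (Finset.singleton_subset_iff.2 habM), Finset.card_singleton]
    at hgrow

theorem IsLinearCDSScheme.finrank_iInf_add_le (hs : IsLinearCDSScheme F L N LZ I Fm Hm)
    {a b : V} {P : List V} {M : Finset (Sym2 V)} (hP : P.IsChain I.unqual) (hab : I.qual a b)
    (haP : a ∈ P) (hbP : b ∈ P) (hM : IsConnCover I a b P M) :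
    finrank F ↥(⨅ e ∈ M, ⨅ v ∈ e, rowSpan (Hm v)) + L ≤
      finrank F ↥(rowSpan (Hm a) ⊓ rowSpan (Hm b)) := by
  obtain ⟨hH, hCor, hSec⟩ := hs
  obtain ⟨habM, -, -, hcover⟩ := hM
  set D := ⨅ e ∈ M, ⨅ v ∈ e, rowSpan (Hm v)
  have hDU : ∀ v ∈ P, D ≤ rowSpan (Hm v) := fun v hv => by
    obtain ⟨e, he, hve⟩ := hcover v hv
    exact (iInf₂_le e he).trans (iInf₂_le v hve)
  refine (hCor a b hab).finrank_add_le (hH a) (hH b) (le_inf (hDU a haP) (hDU b hbP))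
    fun w hw => ?_
  refine (hP.imp_of_mem_imp fun x y hx hy hxy => ?_).eq_of_mem
    (f := fun v => decoder (Fm v) (Hm v) (hH v) w) haP hbP
  exact (hSec x y hxy).decoder_eq (hH x) (hH y) ⟨hDU x hx hw, hDU y hy hw⟩

end Scheme

theorem cds_linear_converse_general {V : Type} (F : Type) [Field F]
    (L N LZ : ℕ)
    (I : CDSInstance V) (r : ℕ) (hr : rho I = (r : ℕ∞))
    (Fm : V → Matrix (Fin N) (Fin L) F) (Hm : V → Matrix (Fin N) (Fin LZ) F)
    (hscheme : IsLinearCDSScheme F L N LZ I Fm Hm) :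
    r * L ≤ (r - 1) * N := by
  obtain ⟨a, b, P, M, hP, hab, haP, hbP, hM, rfl⟩ := exists_isConnCover_card_eq hr
  have hgrow := hscheme.finrank_inf_add_le hM
  have hker := hscheme.finrank_iInf_add_le hP hab haP hbP hM
  obtain ⟨k, hk⟩ := Nat.exists_eq_add_one_of_ne_zero (Finset.card_ne_zero_of_mem hM.1)
  rw [hk, Nat.add_sub_cancel] at hgrow ⊢
  linarith [add_one_mul k L]

/-- **Theorem 1 (linear converse).** For any CDS instance whose minimum connected
edge cover number `ρ` is finite, every linear CDS scheme with secret length `L`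
and signal length `N` satisfies `ρ·L ≤ (ρ−1)·N`, i.e. the linear rate `L/(2N)`
is at most `(ρ−1)/(2ρ)`. -/
theorem cds_linear_converse {V : Type} (F : Type) [Field F] [Fintype F]
    (L N LZ : ℕ) (hL : 0 < L) (hN : 0 < N) (hLZ : 0 < LZ)
    (I : CDSInstance V) (r : ℕ) (hr : rho I = (r : ℕ∞))
    (Fm : V → Matrix (Fin N) (Fin L) F) (Hm : V → Matrix (Fin N) (Fin LZ) F)
    (hscheme : IsLinearCDSScheme F L N LZ I Fm Hm) :
    r * L ≤ (r - 1) * N :=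
  cds_linear_converse_general F L N LZ I r hr Fm Hm hscheme
end

section
/- (Noise alignment) Let F be a field, L, N, L_Z positive integers, and let two nodes v, u carry matrices F_v, F_u ∈ F^{N×L} and H_v, H_u ∈ F^{N×L_Z} with H_v, H_u of full row rank N. If the correctness condition holds for the pair {v,u}, then dim(rowspan(H_v) ∩ rowspan(H_u)) ≥ L. -/
/-!
Take a matrix `W` whose rows form a basis of `rowspan(H_v) ∩ rowspan(H_u)`, so `W` has
`d = dim(rowspan(H_v) ∩ rowspan(H_u))` rows and rank `d`. Its rows lie in both row spaces, so
`W = P_v H_v = P_u H_u` for some `d × N` matrices `P_v, P_u`, which then have rank `d` as well.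
The correctness condition makes the `d × L` matrix `P_v F_v − P_u F_u` have rank `L`,
so `L ≤ d`.
-/

open Matrix

theorem Matrix.exists_mul_eq_of_span_range_le {R : Type*} [CommSemiring R] {l m n : Type*}
    [Fintype n] {H : Matrix n l R} {W : Matrix m l R}
    (h : Submodule.span R (Set.range W) ≤ Submodule.span R (Set.range H)) :
    ∃ P : Matrix m n R, P * H = W := by
  have hrow : ∀ i, ∃ c : n → R, ∑ j, c j • H j = W i := fun i =>
    (Submodule.mem_span_range_iff_exists_fun R).mp (h (Submodule.subset_span ⟨i, rfl⟩))
  choose P hP using hrow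
  refine ⟨Matrix.of P, ?_⟩
  ext i k
  simpa [Matrix.mul_apply, Finset.sum_apply] using congrFun (hP i) k

theorem Matrix.rank_eq_card_height_of_rank_mul {R : Type*} [CommSemiring R]
    [StrongRankCondition R] {l m n : Type*} [Fintype l] [Fintype m] [Fintype n]
    {P : Matrix m n R} {H : Matrix n l R}
    (h : (P * H).rank = Fintype.card m) : P.rank = Fintype.card m :=
  le_antisymm P.rank_le_card_height (h ▸ P.rank_mul_le_left H)

theorem Submodule.exists_matrix_span_range_eq {K : Type*} [Field K] {n : Type*} [Finite n]
    (S : Submodule K (n → K)) :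
    ∃ W : Matrix (Fin (Module.finrank K S)) n K, Submodule.span K (Set.range W) = S := by
  let b := Module.finBasis K S
  refine ⟨fun i => b i, ?_⟩
  rw [Set.range_comp', ← S.coe_subtype, Submodule.span_image, b.span_eq, Submodule.map_top,
    Submodule.range_subtype]

theorem noise_alignment_general (F : Type) [Field F] (L N LZ : ℕ)
    (Fv Fu : Matrix (Fin N) (Fin L) F) (Hv Hu : Matrix (Fin N) (Fin LZ) F)
    (hc : CorrectPair F L N LZ Fv Fu Hv Hu) :
    L ≤ Module.finrank F ↥(rowSpan Hv ⊓ rowSpan Hu) := by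
  set S := rowSpan Hv ⊓ rowSpan Hu
  obtain ⟨W, hW⟩ := S.exists_matrix_span_range_eq
  have hWrank : W.rank = Module.finrank F S := by
    rw [W.rank_eq_finrank_span_row, W.row_def, hW]
  obtain ⟨Pv, hPv⟩ := exists_mul_eq_of_span_range_le (hW.trans_le inf_le_left)
  obtain ⟨Pu, hPu⟩ := exists_mul_eq_of_span_range_le (hW.trans_le inf_le_right)
  have hPv_rank : Pv.rank = Module.finrank F S := by
    simpa using rank_eq_card_height_of_rank_mul (P := Pv) (H := Hv)
      (by rw [hPv, hWrank, Fintype.card_fin])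
  have hPu_rank : Pu.rank = Module.finrank F S := by
    simpa using rank_eq_card_height_of_rank_mul (P := Pu) (H := Hu)
      (by rw [hPu, hWrank, Fintype.card_fin])
  calc L = (Pv * Fv - Pu * Fu).rank := (hc _ Pv Pu (hPv.trans hPu.symm) hPv_rank hPu_rank).symm
    _ ≤ Module.finrank F S := rank_le_height _

/-- **Noise alignment (Lemma 1, first part).** If the correctness condition holds
for the pair `{v, u}`, then the overlap of the two noise row spaces has dimension
at least `L`. -/
theorem noise_alignment (F : Type) [Field F] (L N LZ : ℕ)
    (hL : 0 < L) (hN : 0 < N) (hLZ : 0 < LZ)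
    (Fv Fu : Matrix (Fin N) (Fin L) F) (Hv Hu : Matrix (Fin N) (Fin LZ) F)
    (hHv : Hv.rank = N) (hHu : Hu.rank = N)
    (hc : CorrectPair F L N LZ Fv Fu Hv Hu) :
    L ≤ Module.finrank F ↥(rowSpan Hv ⊓ rowSpan Hu) :=
  noise_alignment_general F L N LZ Fv Fu Hv Hu hc
end

section
/- Let F be a finite field, let S be uniformly distributed on F^L, let Z be uniformly distributed on F^{L_Z}, and let S and Z be independent. Let F_v, F_u ∈ F^{N×L} and let H_v, H_u ∈ F^{N×L_Z} have full row rank N. Suppose that for all matrices P_v, P_u over F with P_v H_v = P_u H_u one has P_v F_v = P_u F_u. Then the random pair (F_v S + H_v Z, F_u S + H_u Z) is independent of S; equivalently, for every pair of secrets s, s' ∈ F^L and every output pair (a, b) ∈ F^N × F^N, the number of z ∈ F^{L_Z} with (F_v s + H_v z, F_u s + H_u z) = (a, b) equals the number of z ∈ F^{L_Z} with (F_v s' + H_v z, F_u s' + H_u z) = (a, b). -/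
open Matrix

/-- Fibers of a linear map over two points whose difference lies in the range
have the same cardinality. -/
lemma fiber_card_eq {F V W : Type} [Field F] [AddCommGroup V] [Module F V]
    [AddCommGroup W] [Module F W] (T : V →ₗ[F] W) (w w' : W)
    (h : w - w' ∈ LinearMap.range T) :
    Nat.card {z : V // T z = w} = Nat.card {z : V // T z = w'} := by
  obtain ⟨z0, hz0⟩ := h
  apply Nat.card_congr
  refine ⟨fun z => ⟨z.1 - z0, ?_⟩, fun z => ⟨z.1 + z0, ?_⟩, fun z => by simp, fun z => by simp⟩
  · have := z.2
    simp [map_sub, this, hz0]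
  · have := z.2
    simp [map_add, this, hz0]

/-- The linear security condition implies information-theoretic security: the
pair of signals `(F_v S + H_v Z, F_u S + H_u Z)` is independent of the secret
`S`, expressed by counting: for any two secrets `s, s'` and any output pair
`(a, b)`, the number of noise vectors `z` producing `(a, b)` from `s` equals
the number producing `(a, b)` from `s'`. -/
theorem linear_security_implies_secrecy (F : Type) [Field F] [Fintype F]
    (L N LZ : ℕ) (hL : 0 < L) (hN : 0 < N) (hLZ : 0 < LZ)
    (Fv Fu : Matrix (Fin N) (Fin L) F) (Hv Hu : Matrix (Fin N) (Fin LZ) F)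
    (hHv : Hv.rank = N) (hHu : Hu.rank = N)
    (hsec : SecurePair F L N LZ Fv Fu Hv Hu)
    (s s' : Fin L → F) (a b : Fin N → F) :
    Nat.card {z : Fin LZ → F //
        Fv.mulVec s + Hv.mulVec z = a ∧ Fu.mulVec s + Hu.mulVec z = b}
      = Nat.card {z : Fin LZ → F //
        Fv.mulVec s' + Hv.mulVec z = a ∧ Fu.mulVec s' + Hu.mulVec z = b} := by
  set M : Matrix (Fin N ⊕ Fin N) (Fin LZ) F := Matrix.fromRows Hv Hu with hM
  set G : Matrix (Fin N ⊕ Fin N) (Fin L) F := Matrix.fromRows Fv Fu with hG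
  -- key: every G.mulVec x lies in the range of M.mulVecLin
  have key : ∀ x : Fin L → F, G.mulVec x ∈ LinearMap.range M.mulVecLin := by
    intro x
    by_contra hx
    obtain ⟨f, hf, hbot⟩ := (LinearMap.range M.mulVecLin).exists_dual_map_eq_bot_of_notMem hx
      inferInstance
    set p : Fin N ⊕ Fin N → F := fun j => f (Pi.single j 1) with hp
    have hf_eq : ∀ y : Fin N ⊕ Fin N → F, f y = ∑ j, y j * p j := by
      intro y
      have h0 : ∀ j : Fin N ⊕ Fin N, (fun j' => if j = j' then (1:F) else 0) = Pi.single j 1 := by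
        intro j; funext j'; simp [Pi.single_apply, eq_comm]
      have := f.pi_apply_eq_sum_univ y
      simp only [h0, smul_eq_mul] at this
      exact this
    have hker : ∀ z : Fin LZ → F, f (M.mulVec z) = 0 := by
      intro z
      have : f (M.mulVec z) ∈ (LinearMap.range M.mulVecLin).map f :=
        Submodule.mem_map_of_mem ⟨z, rfl⟩
      rw [hbot] at this
      simpa using this
    -- build 1×N matrices
    set Pv : Matrix (Fin 1) (Fin N) F := Matrix.of fun _ i => p (Sum.inl i) with hPv
    set Pu : Matrix (Fin 1) (Fin N) F := Matrix.of fun _ i => -p (Sum.inr i) with hPu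
    have hzero : ∀ j : Fin LZ, ∑ i : Fin N ⊕ Fin N, p i * M i j = 0 := by
      intro j
      have := hker (Pi.single j 1)
      rw [hf_eq] at this
      simpa [Matrix.mulVec_single, mul_comm] using this
    have hPH : Pv * Hv = Pu * Hu := by
      ext i j
      simp only [Matrix.mul_apply, hPv, hPu, Matrix.of_apply]
      have := hzero j
      rw [Fintype.sum_sum_type] at this
      simp only [hM, Matrix.fromRows_apply_inl, Matrix.fromRows_apply_inr] at this
      have h2 : ∑ i : Fin N, p (Sum.inl i) * Hv i j
          = ∑ i : Fin N, -p (Sum.inr i) * Hu i j := by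
        rw [← sub_eq_zero]
        simp only [neg_mul, Finset.sum_neg_distrib, sub_neg_eq_add]
        exact this
      exact h2
    have hPF := hsec 1 Pv Pu hPH
    have hFzero : ∀ l : Fin L, ∑ i : Fin N ⊕ Fin N, p i * G i l = 0 := by
      intro l
      have := congrFun (congrFun hPF 0) l
      simp only [Matrix.mul_apply, hPv, hPu, Matrix.of_apply] at this
      rw [Fintype.sum_sum_type]
      simp only [hG, Matrix.fromRows_apply_inl, Matrix.fromRows_apply_inr]
      rw [← sub_eq_zero] at this ⊢
      simpa [neg_mul, sub_neg_eq_add] using this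
    have : f (G.mulVec x) = 0 := by
      rw [hf_eq]
      simp only [Matrix.mulVec, dotProduct]
      have : ∑ i : Fin N ⊕ Fin N, (∑ l, G i l * x l) * p i
          = ∑ l, (∑ i : Fin N ⊕ Fin N, p i * G i l) * x l := by
        simp_rw [Finset.sum_mul]
        rw [Finset.sum_comm]
        exact Finset.sum_congr rfl fun l _ => Finset.sum_congr rfl fun i _ => by ring
      rw [this]
      simp [hFzero]
    exact hf this
  -- now conclude by fiber_card_eq
  have hiff : ∀ (t : Fin L → F) (z : Fin LZ → F),
      (Fv.mulVec t + Hv.mulVec z = a ∧ Fu.mulVec t + Hu.mulVec z = b)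
        ↔ M.mulVecLin z = Sum.elim a b - G.mulVec t := by
    intro t z
    have hsub : Sum.elim a b - G.mulVec t
        = Sum.elim (a - Fv.mulVec t) (b - Fu.mulVec t) := by
      funext j; cases j <;> simp [hG, Matrix.fromRows_mulVec]
    rw [Matrix.mulVecLin_apply, hM, Matrix.fromRows_mulVec, hsub]
    constructor
    · rintro ⟨h1, h2⟩
      funext j; cases j <;> simp [← h1, ← h2]
    · intro h
      have h1 : Hv.mulVec z = a - Fv.mulVec t := by
        funext i; simpa using congrFun h (Sum.inl i)
      have h2 : Hu.mulVec z = b - Fu.mulVec t := by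
        funext i; simpa using congrFun h (Sum.inr i)
      rw [h1, h2]
      constructor <;> abel
  simp only [hiff]
  apply fiber_card_eq
  have : (Sum.elim a b - G.mulVec s) - (Sum.elim a b - G.mulVec s') = G.mulVec (s' - s) := by
    rw [Matrix.mulVec_sub]; abel
  rw [this]
  exact key _
end

section
/- Let F be a field, let F_v, F_u ∈ F^{N×L} and H_v, H_u ∈ F^{N×L_Z}. Suppose there exist matrices P_v, P_u over F with P_v H_v = P_u H_u such that the matrix P_v F_v − P_u F_u has rank L. Then the secret is exactly recoverable from the pair of signals: for all s, s' ∈ F^L and z, z' ∈ F^{L_Z}, if F_v s + H_v z = F_v s' + H_v z' and F_u s + H_u z = F_u s' + H_u z', then s = s'. -/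
open Matrix

/-- The linear correctness condition implies zero-error decodability: if some
matrices `P_v, P_u` with `P_v H_v = P_u H_u` make `P_v F_v − P_u F_u` of full
rank `L`, then the secret is exactly recoverable from the two signals. -/
theorem linear_correctness_implies_decodability (F : Type) [Field F]
    (L N LZ : ℕ)
    (Fv Fu : Matrix (Fin N) (Fin L) F) (Hv Hu : Matrix (Fin N) (Fin LZ) F)
    (k : ℕ) (Pv Pu : Matrix (Fin k) (Fin N) F)
    (hP : Pv * Hv = Pu * Hu) (hrank : (Pv * Fv - Pu * Fu).rank = L)
    (s s' : Fin L → F) (z z' : Fin LZ → F)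
    (h1 : Fv.mulVec s + Hv.mulVec z = Fv.mulVec s' + Hv.mulVec z')
    (h2 : Fu.mulVec s + Hu.mulVec z = Fu.mulVec s' + Hu.mulVec z') :
    s = s' := by
  set M := Pv * Fv - Pu * Fu with hM
  -- M (s - s') = 0
  have key : M.mulVec (s - s') = 0 := by
    have e1 : Pv.mulVec (Fv.mulVec s + Hv.mulVec z) =
        Pv.mulVec (Fv.mulVec s' + Hv.mulVec z') := by rw [h1]
    have e2 : Pu.mulVec (Fu.mulVec s + Hu.mulVec z) =
        Pu.mulVec (Fu.mulVec s' + Hu.mulVec z') := by rw [h2]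
    simp only [Matrix.mulVec_add, ← Matrix.mulVec_mulVec] at e1 e2
    have hz : (Pv * Hv).mulVec z = (Pu * Hu).mulVec z := by rw [hP]
    have hz' : (Pv * Hv).mulVec z' = (Pu * Hu).mulVec z' := by rw [hP]
    simp only [Matrix.mulVec_mulVec] at e1 e2 hz hz'
    have : (Pv * Fv).mulVec s - (Pu * Fu).mulVec s =
        (Pv * Fv).mulVec s' - (Pu * Fu).mulVec s' := by
      have := congrArg₂ (· - ·) e1 e2
      rw [hP] at this
      abel_nf at this ⊢
      linear_combination (norm := abel) this
    simp only [hM, Matrix.sub_mulVec, Matrix.mulVec_sub]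
    rw [sub_eq_zero]
    exact this
  -- rank L implies injective mulVec
  have hinj : Function.Injective M.mulVecLin := by
    rw [← LinearMap.ker_eq_bot]
    have hrn := LinearMap.finrank_range_add_finrank_ker M.mulVecLin
    rw [Matrix.rank] at hrank
    rw [hrank, Module.finrank_pi, Fintype.card_fin] at hrn
    have : Module.finrank F (LinearMap.ker M.mulVecLin) = 0 := by omega
    exact Submodule.finrank_eq_zero.mp this
  have : M.mulVecLin (s - s') = M.mulVecLin 0 := by
    simp [Matrix.mulVecLin_apply, key]
  have := hinj this
  exact sub_eq_zero.mp this
end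

section
/- Let F be a field and let C be a k×n matrix over F such that every square submatrix of C is invertible. Let T ⊆ {1, ..., n} and let i_1 < i_2 < ... < i_{k'} be distinct row indices of C with |T| + k' = n (so k' ≤ k). Then the n×n matrix whose rows are the standard basis row vectors e_j ∈ F^n for j ∈ T together with the rows C_{i_1}, ..., C_{i_{k'}} of C is invertible. -/
/-- **Cauchy-type completion lemma.** Let `C` be a `k × n` matrix every square
submatrix of which is invertible, let `T ⊆ Fin n`, and let `i : Fin k' → Fin k`
be strictly increasing row indices with `|T| + k' = n`. Then the `n × n` matrix
whose rows are the standard basis row vectors `e_j` for `j ∈ T` together with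
the rows `C (i 0), …, C (i (k'−1))` of `C` is invertible. -/
theorem basis_plus_generic_rows_invertible {F : Type} [Field F] (k n : ℕ)
    (C : Matrix (Fin k) (Fin n) F)
    (hC : ∀ (m : ℕ) (r : Fin m → Fin k) (c : Fin m → Fin n),
      Function.Injective r → Function.Injective c →
      IsUnit (C.submatrix r c).det)
    (T : Finset (Fin n)) (k' : ℕ) (i : Fin k' → Fin k) (hi : StrictMono i)
    (hcard : T.card + k' = n)
    (e : (↥T ⊕ Fin k') ≃ Fin n) :
    IsUnit (((Matrix.of fun (x : ↥T ⊕ Fin k') (c : Fin n) =>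
        Sum.elim (fun j : ↥T => Pi.single (j : Fin n) (1 : F) c)
          (fun t : Fin k' => C (i t) c) x).submatrix e.symm id).det) := by
  classical
  set M : Matrix (↥T ⊕ Fin k') (Fin n) F :=
    Matrix.of fun (x : ↥T ⊕ Fin k') (c : Fin n) =>
      Sum.elim (fun j : ↥T => (Pi.single (j : Fin n) (1 : F) : Fin n → F) c)
        (fun t : Fin k' => C (i t) c) x with hM
  -- column equivalence
  have hcompl : (Tᶜ : Finset (Fin n)).card = k' := by
    rw [Finset.card_compl, Fintype.card_fin]
    omega
  let g0 : Fin k' ≃ ↥(Tᶜ : Finset (Fin n)) :=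
    (finCongr hcompl.symm).trans (Tᶜ : Finset (Fin n)).equivFin.symm
  let g1 : ↥(Tᶜ : Finset (Fin n)) ≃ {x : Fin n // x ∉ T} :=
    (Equiv.subtypeEquivRight (fun x => Finset.mem_compl))
  let f : (↥T ⊕ Fin k') ≃ Fin n :=
    (Equiv.sumCongr (Equiv.refl ↥T) (g0.trans g1)).trans (Equiv.sumCompl (· ∈ T))
  have hf_inl : ∀ j : ↥T, f (Sum.inl j) = (j : Fin n) := fun j => rfl
  have hf_inr : ∀ t : Fin k', f (Sum.inr t) = ((g0 t : Fin n)) := fun t => rfl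
  have hf_inr_not : ∀ t : Fin k', f (Sum.inr t) ∉ T := by
    intro t
    rw [hf_inr]
    exact Finset.mem_compl.mp (g0 t).2
  -- A is the square matrix with columns reindexed by f
  set A : Matrix (↥T ⊕ Fin k') (↥T ⊕ Fin k') F := M.submatrix id f with hA
  have hAblock : A = Matrix.fromBlocks (1 : Matrix ↥T ↥T F) 0
      (Matrix.of fun t j => C (i t) ((j : ↥T) : Fin n))
      (Matrix.of fun t t' => C (i t) (f (Sum.inr t'))) := by
    ext x y
    cases x with
    | inl j =>
      cases y with
      | inl j' =>
        simp only [hA, Matrix.submatrix_apply, id, hM, Matrix.of_apply, Sum.elim_inl,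
          hf_inl, Matrix.fromBlocks_apply₁₁, Matrix.one_apply, Pi.single_apply]
        by_cases h : j = j'
        · simp [h, Pi.single_apply]
        · have h2 : ((j' : Fin n)) ≠ (j : Fin n) := fun hc => h (Subtype.ext hc.symm)
          simp [h, h2, Pi.single_apply]
      | inr t =>
        simp only [hA, Matrix.submatrix_apply, id, hM, Matrix.of_apply, Sum.elim_inl,
          Matrix.fromBlocks_apply₁₂, Matrix.zero_apply]
        have : f (Sum.inr t) ≠ (j : Fin n) := by
          intro hc
          exact hf_inr_not t (hc ▸ j.2)
        simp [Pi.single_apply, this]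
    | inr t =>
      cases y with
      | inl j' => rfl
      | inr t' => rfl
  have hDdet : IsUnit (Matrix.of (fun t t' => C (i t) (f (Sum.inr t'))) :
      Matrix (Fin k') (Fin k') F).det := by
    have : (Matrix.of (fun t t' => C (i t) (f (Sum.inr t'))) :
        Matrix (Fin k') (Fin k') F) = C.submatrix i (fun t' => f (Sum.inr t')) := rfl
    rw [this]
    exact hC k' i _ hi.injective (fun a b hab => Sum.inr_injective (f.injective hab))
  have hAdet : IsUnit A.det := by
    rw [hAblock, Matrix.det_fromBlocks_zero₁₂, Matrix.det_one, one_mul]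
    exact hDdet
  -- relate goal to A.det
  have hgoal : M.submatrix e.symm id =
      (A.submatrix e.symm e.symm).submatrix id (Equiv.trans f.symm e) := by
    ext r c
    simp [hA, Matrix.submatrix_apply]
  rw [hgoal, Matrix.det_permute' (Equiv.trans f.symm e) (A.submatrix e.symm e.symm),
    Matrix.det_submatrix_equiv_self]
  have hs : IsUnit (((Equiv.Perm.sign ((Equiv.trans f.symm e) : Equiv.Perm (Fin n)) : ℤ)) : F) := by
    rcases Int.units_eq_one_or (Equiv.Perm.sign ((Equiv.trans f.symm e) : Equiv.Perm (Fin n)))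
      with h | h <;> simp [h]
  exact hs.mul hAdet
end
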